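/- Let g : [0,∞) → [0,∞) be an increasing, unbounded, differentiable function with g(0) = 0, and for each integer Δ ≥ 0 let s_Δ = ⌈g^{-1}(Δ^{1/3})⌉. Let Δ₀ be a nonnegative integer and let b : ℕ → ℕ be a function such that for every integer Δ ≥ Δ₀: (1) binom(s_Δ, b(Δ)) ≤ Δ^{1/3}/4; (2) b(Δ) ≤ s_Δ/3; and (3) (log g(s))′ ≥ 2b(Δ)/s for every s ≥ s_Δ. If G is a graph of maximum degree Δ ≥ Δ₀ and every neighborhood subgraph F of G with s ≥ s_Δ vertices satisfies I(F) ≥ g(s), then G is b(Δ)-IS-rich. -/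

import Mathlib

/-!
Write `s = s_Δ` and `k = b(Δ)`. Since `∑_{i ≤ k} C(m, i) ≤ 2 C(m, k)` as soon as `3k ≤ m + 1`,
a `k`-large neighborhood subgraph `F` has `n ≥ s` vertices: otherwise
`binom(n, ≤ k) ≤ 2 C(s, k) ≤ Δ^{1/3} / 2`. On `[s, n]` the bound on `(log g)'` makes
`log g(x) - 2k log x` nondecreasing, hence
`I(F) ≥ g(n) ≥ g(s) (n/s)^{2k} ≥ 4 C(s, k) (n/s)^{2k} ≥ 4 C(n, k) ≥ 2 binom(n, ≤ k)`,
where `C(n, k) ≤ C(s, k) (n/s)^{2k}` because `(n - i) / (s - i) ≤ (n/s)^2` for `2i ≤ s`.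
-/

open Filter MeasureTheory

namespace RandomCorr

/-- A correspondence assignment for a graph `G`: a list assignment `L` together with,
for each edge, a partial matching between the colors of its endpoints,
encoded as a symmetric relation `M` supported on edges of `G`. -/
structure CorrAssignment {V : Type} (G : SimpleGraph V) where
  L : V → Finset ℕ
  M : V → ℕ → V → ℕ → Prop
  symm : ∀ u i v j, M u i v j → M v j u i
  adj_of : ∀ u i v j, M u i v j → G.Adj u v
  mem_left : ∀ u i v j, M u i v j → i ∈ L u
  mem_right : ∀ u i v j, M u i v j → j ∈ L v
  matching : ∀ u i v j j', M u i v j → M u i v j' → j = j'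

variable {V : Type}

/-- An `(L,M)`-coloring. -/
def CorrAssignment.IsColoring {G : SimpleGraph V} (C : CorrAssignment G) (φ : V → ℕ) : Prop :=
  (∀ v, φ v ∈ C.L v) ∧ ∀ u v, ¬ C.M u (φ u) v (φ v)

/-- `(L,M)` is an `ℓ`-correspondence assignment. -/
def IsLAssignment {G : SimpleGraph V} (C : CorrAssignment G) (ℓ : ℕ) : Prop :=
  ∀ v, ℓ ≤ (C.L v).card

/-- The correspondence chromatic number of `G` is at most `ℓ`. -/
def corrChromAtMost (G : SimpleGraph V) (ℓ : ℕ) : Prop :=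
  ∀ C : CorrAssignment G, IsLAssignment C ℓ → ∃ φ, C.IsColoring φ

/-- Maximum degree of a finite graph. -/
noncomputable def maxDeg [Fintype V] (G : SimpleGraph V) : ℕ :=
  Finset.univ.sup fun v => (G.neighborSet v).ncard

/-- `binom(n, ≤ b) = ∑_{i=0}^{⌊b⌋} binom(n,i)`. -/
noncomputable def binomLe (n : ℕ) (b : ℝ) : ℕ :=
  ∑ i ∈ Finset.range (⌊b⌋₊ + 1), n.choose i

/-- The number of independent sets (including the empty set) of a subgraph `F`. -/
noncomputable def subIndepCount {W : Type} {H : SimpleGraph W} (F : H.Subgraph) : ℕ :=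
  {S : Set W | S ⊆ F.verts ∧ ∀ a ∈ S, ∀ b ∈ S, ¬ F.Adj a b}.ncard

/-- A neighborhood subgraph: a subgraph whose vertex set is contained in the
neighborhood of some vertex. -/
def IsNbrSubgraph {W : Type} {H : SimpleGraph W} (F : H.Subgraph) : Prop :=
  ∃ v, F.verts ⊆ H.neighborSet v

/-- `G` is `b`-IS-rich (with respect to maximum degree `Δ`): every `b`-large
neighborhood subgraph `F` satisfies `I(F) ≥ 2 · binom(|V(F)|, ≤ b)`. -/
def ISRich (G : SimpleGraph V) (b : ℝ) (Δ : ℕ) : Prop :=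
  ∀ F : G.Subgraph, IsNbrSubgraph F →
    (Δ : ℝ) ^ ((1 : ℝ)/3) < (binomLe F.verts.ncard b : ℝ) →
    2 * binomLe F.verts.ncard b ≤ subIndepCount F

/-- The cover graph of a correspondence assignment. -/
def coverGraph {G : SimpleGraph V} (C : CorrAssignment G) : SimpleGraph (V × ℕ) where
  Adj x y := C.M x.1 x.2 y.1 y.2
  symm := ⟨fun x y h => C.symm _ _ _ _ h⟩
  loopless := ⟨fun x h => G.loopless.irrefl x.1 (C.adj_of _ _ _ _ h)⟩

/-- A correspondence assignment is `b`-IS-rich (with respect to `Δ`) if every `b`-large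
neighborhood subgraph of its cover graph has at least `2 · binom(|V(F)|, ≤ b)`
independent sets. -/
def CorrAssignment.ISRich {G : SimpleGraph V} (C : CorrAssignment G) (b : ℝ) (Δ : ℕ) : Prop :=
  ∀ F : (coverGraph C).Subgraph, IsNbrSubgraph F →
    (Δ : ℝ) ^ ((1 : ℝ)/3) < (binomLe F.verts.ncard b : ℝ) →
    2 * binomLe F.verts.ncard b ≤ subIndepCount F

/-- Bernoulli measure on `Bool` with success probability `p` (truncated to `[0,1]`). -/
noncomputable def bern (p : ℝ) : Measure Bool :=
  (PMF.bernoulli (min (Real.toNNReal p) 1) (min_le_right _ _)).toMeasure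

/-- The Erdős–Rényi measure: each potential edge appears independently with
probability `p`. -/
noncomputable def erdosRenyi (n : ℕ) (p : ℝ) : Measure (Sym2 (Fin n) → Bool) :=
  Measure.pi fun _ => bern p

/-- The graph determined by an edge-indicator function. -/
def graphOf {n : ℕ} (ω : Sym2 (Fin n) → Bool) : SimpleGraph (Fin n) where
  Adj u v := u ≠ v ∧ ω s(u, v) = true
  symm := by
    constructor
    intro u v h
    refine ⟨h.1.symm, ?_⟩
    rw [Sym2.eq_swap]
    exact h.2
  loopless := ⟨fun u h => h.1 rfl⟩

/-- `G` has a complete minor of order `k`. -/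
def HasCompleteMinor (G : SimpleGraph V) (k : ℕ) : Prop :=
  ∃ B : Fin k → Set V,
    (∀ i, (B i).Nonempty) ∧
    (∀ i, (G.induce (B i)).Connected) ∧
    (∀ i j, i ≠ j → Disjoint (B i) (B j)) ∧
    (∀ i j, i ≠ j → ∃ u ∈ B i, ∃ v ∈ B j, G.Adj u v)

/-- The Hadwiger number: the largest `k` such that `K_k` is a minor of `G`. -/
noncomputable def hadwigerNumber [Fintype V] (G : SimpleGraph V) : ℕ :=
  sSup {k | HasCompleteMinor G k}

/-- Independence number. -/
noncomputable def indepNum [Fintype V] (G : SimpleGraph V) : ℕ :=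
  sSup {k | ∃ S : Finset V, S.card = k ∧ ∀ a ∈ S, ∀ b ∈ S, ¬ G.Adj a b}

/-- A partial `(L,M)`-coloring. -/
def IsPartialColoring {G : SimpleGraph V} (C : CorrAssignment G) (φ : V → Option ℕ) : Prop :=
  (∀ v c, φ v = some c → c ∈ C.L v) ∧
  ∀ u v cu cv, φ u = some cu → φ v = some cv → ¬ C.M u cu v cv

/-- The number of colors available at `u` with respect to a partial coloring `φ`. -/
noncomputable def availCount {G : SimpleGraph V} (C : CorrAssignment G)
    (φ : V → Option ℕ) (u : V) : ℕ :=
  {c : ℕ | c ∈ C.L u ∧ ∀ v cv, φ v = some cv → ¬ C.M u c v cv}.ncard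

/-- The event `A_u`: `u` is uncolored and fewer than `Δ^{7/12}` colors are available
at `u`. -/
def EventA {G : SimpleGraph V} (C : CorrAssignment G) (Δ : ℕ) (u : V)
    (φ : V → Option ℕ) : Prop :=
  φ u = none ∧ (availCount C φ u : ℝ) < (Δ : ℝ) ^ ((7 : ℝ)/12)

/-- The number of independent sets of `F` of size at least `m`. -/
noncomputable def indepGeCount {W : Type} {H : SimpleGraph W} (F : H.Subgraph) (m : ℕ) : ℕ :=
  {S : Set W | S ⊆ F.verts ∧ (∀ a ∈ S, ∀ b ∈ S, ¬ F.Adj a b) ∧ m ≤ S.ncard}.ncard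

/-- The median size `ᾱ(F)` of an independent set: the largest `m` such that at least
half of the independent sets of `F` have size at least `m`. -/
noncomputable def medianIndep {W : Type} {H : SimpleGraph W} (F : H.Subgraph) : ℕ :=
  sSup {m : ℕ | subIndepCount F ≤ 2 * indepGeCount F m}

end RandomCorr

/-- `s_Δ = ⌈g⁻¹(Δ^{1/3})⌉`: the least natural number `s` with `g(s) ≥ Δ^{1/3}`. -/
noncomputable def RandomCorr.sNat (g : ℝ → ℝ) (Δ : ℕ) : ℕ :=
  sInf {s : ℕ | (Δ : ℝ) ^ ((1 : ℝ)/3) ≤ g s}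

namespace RandomCorr

open Set Real

lemma two_mul_choose_le_choose_succ {m k : ℕ} (h : 3 * k + 2 ≤ m) :
    2 * m.choose k ≤ m.choose (k + 1) := by
  refine Nat.le_of_mul_le_mul_right (c := k + 1) ?_ k.succ_pos
  rw [Nat.choose_succ_right_eq, mul_comm 2, mul_assoc]
  exact Nat.mul_le_mul_left _ (by omega)

lemma sum_range_choose_le_two_mul_choose {m b : ℕ} (h : 3 * b ≤ m + 1) :
    ∑ i ∈ Finset.range (b + 1), m.choose i ≤ 2 * m.choose b := by
  induction b with
  | zero => simp
  | succ k ih =>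
    rw [Finset.sum_range_succ]
    have := ih (by omega)
    have := two_mul_choose_le_choose_succ (m := m) (k := k) (by omega)
    omega

lemma binomLe_natCast (n b : ℕ) : binomLe n b = ∑ i ∈ Finset.range (b + 1), n.choose i := by
  simp [binomLe]

lemma binomLe_le_binomLe {m n : ℕ} (h : m ≤ n) (b : ℝ) : binomLe m b ≤ binomLe n b :=
  Finset.sum_le_sum fun i _ => Nat.choose_le_choose i h

lemma binomLe_le_two_mul_choose {m b : ℕ} (h : 3 * b ≤ m + 1) : binomLe m b ≤ 2 * m.choose b := by
  rw [binomLe_natCast]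
  exact sum_range_choose_le_two_mul_choose h

lemma le_of_two_mul_choose_lt_binomLe {s n b : ℕ} (hb : 3 * b ≤ s + 1)
    (h : 2 * s.choose b < binomLe n b) : s ≤ n := by
  by_contra! hns
  have := (binomLe_le_binomLe hns.le b).trans (binomLe_le_two_mul_choose hb)
  omega

lemma sub_mul_sq_le_sub_mul_sq {i s n : ℕ} (hi : 2 * i ≤ s) (hsn : s ≤ n) :
    (n - i) * s ^ 2 ≤ (s - i) * n ^ 2 := by
  obtain ⟨a, rfl⟩ := Nat.exists_eq_add_of_le (hi.trans' (Nat.le_mul_of_pos_left i two_pos))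
  obtain ⟨t, rfl⟩ := Nat.exists_eq_add_of_le hsn
  rw [show i + a + t - i = a + t by omega, Nat.add_sub_cancel_left]
  -- the difference of the two sides is t * ((i + a) * (a - i) + t * a)
  nlinarith [Nat.mul_le_mul (le_refl (i + a)) (show i ≤ a by omega), Nat.zero_le (t * t * a),
    Nat.zero_le (t * a * a)]

lemma choose_mul_pow_le_choose_mul_pow {b s n : ℕ} (hb : 2 * b ≤ s + 2) (hsn : s ≤ n) :
    n.choose b * s ^ (2 * b) ≤ s.choose b * n ^ (2 * b) := by
  have hpow : ∀ m : ℕ, m ^ (2 * b) = ∏ _i ∈ Finset.range b, m ^ 2 := fun m => by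
    rw [Finset.prod_const, Finset.card_range, ← pow_mul]
  have hdesc : n.descFactorial b * s ^ (2 * b) ≤ s.descFactorial b * n ^ (2 * b) := by
    rw [Nat.descFactorial_eq_prod_range, Nat.descFactorial_eq_prod_range, hpow, hpow,
      ← Finset.prod_mul_distrib, ← Finset.prod_mul_distrib]
    exact Finset.prod_le_prod' fun i hi => sub_mul_sq_le_sub_mul_sq (by simp at hi; omega) hsn
  rw [Nat.descFactorial_eq_factorial_mul_choose, Nat.descFactorial_eq_factorial_mul_choose,
    mul_assoc, mul_assoc] at hdesc
  exact Nat.le_of_mul_le_mul_left hdesc b.factorial_pos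

lemma two_mul_binomLe_le_of_choose_mul_pow_le {s n k : ℕ} {z : ℝ} (hs : 0 < s)
    (hks : 3 * k ≤ s) (hsn : s ≤ n) (hz : 4 * s.choose k * ((n : ℝ) / s) ^ (2 * k) ≤ z) :
    (2 * binomLe n k : ℝ) ≤ z := by
  have hchoose : (n.choose k : ℝ) ≤ s.choose k * ((n : ℝ) / s) ^ (2 * k) := by
    rw [div_pow, ← mul_div_assoc, le_div_iff₀ (by positivity)]
    exact_mod_cast choose_mul_pow_le_choose_mul_pow (by omega) hsn
  have hbinom : (binomLe n k : ℝ) ≤ 2 * n.choose k := by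
    exact_mod_cast binomLe_le_two_mul_choose (by omega)
  linarith

lemma monotoneOn_log_sub_mul_log {g : ℝ → ℝ} {c s t : ℝ} (hs : 0 < s)
    (hcont : ContinuousOn g (Icc s t)) (hdiff : DifferentiableOn ℝ g (Ioo s t))
    (hpos : ∀ x ∈ Icc s t, 0 < g x)
    (hderiv : ∀ x ∈ Ioo s t, c / x ≤ deriv (fun x => log (g x)) x) :
    MonotoneOn (fun x => log (g x) - c * log x) (Icc s t) := by
  have hx0 : ∀ x ∈ Icc s t, x ≠ 0 := fun x hx => (hs.trans_le hx.1).ne'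
  have hlogg : ∀ x ∈ Ioo s t, DifferentiableAt ℝ (fun x => log (g x)) x := fun x hx =>
    ((hdiff x hx).differentiableAt (isOpen_Ioo.mem_nhds hx)).log
      (hpos x (Ioo_subset_Icc_self hx)).ne'
  have hlog : ∀ x ∈ Ioo s t, DifferentiableAt ℝ log x := fun x hx =>
    differentiableAt_log (hx0 x (Ioo_subset_Icc_self hx))
  apply monotoneOn_of_deriv_nonneg (convex_Icc s t)
  · exact (hcont.log fun x hx => (hpos x hx).ne').sub
      (continuousOn_const.mul (continuousOn_log.mono hx0))
  · rw [interior_Icc]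
    exact fun x hx => ((hlogg x hx).sub ((hlog x hx).const_mul c)).differentiableWithinAt
  · rw [interior_Icc]
    intro x hx
    rw [deriv_fun_sub (hlogg x hx) ((hlog x hx).const_mul c), deriv_const_mul _ (hlog x hx),
      deriv_log, ← div_eq_mul_inv]
    exact sub_nonneg.2 (hderiv x hx)

lemma mul_rpow_div_le_of_le_deriv_log {g : ℝ → ℝ} {c s t : ℝ} (hs : 0 < s) (hst : s ≤ t)
    (hcont : ContinuousOn g (Icc s t)) (hdiff : DifferentiableOn ℝ g (Ioo s t))
    (hpos : ∀ x ∈ Icc s t, 0 < g x)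
    (hderiv : ∀ x ∈ Ioo s t, c / x ≤ deriv (fun x => log (g x)) x) :
    g s * (t / s) ^ c ≤ g t := by
  have ht : 0 < t := hs.trans_le hst
  have hgs := hpos s (left_mem_Icc.2 hst)
  have hmono := monotoneOn_log_sub_mul_log hs hcont hdiff hpos hderiv
    (left_mem_Icc.2 hst) (right_mem_Icc.2 hst) hst
  rw [← log_le_log_iff (by positivity) (hpos t (right_mem_Icc.2 hst)), log_mul hgs.ne'
    (by positivity), log_rpow (by positivity), log_div ht.ne' hs.ne']
  simp only at hmono
  linarith

lemma rpow_one_div_three_le_apply_sNat {g : ℝ → ℝ} (hg : Tendsto g atTop atTop) (Δ : ℕ) :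
    (Δ : ℝ) ^ ((1 : ℝ) / 3) ≤ g (sNat g Δ) := by
  obtain ⟨a, ha⟩ := eventually_atTop.1 (hg.eventually_ge_atTop ((Δ : ℝ) ^ ((1 : ℝ) / 3)))
  exact Nat.sInf_mem (s := {s : ℕ | (Δ : ℝ) ^ ((1 : ℝ) / 3) ≤ g s})
    ⟨⌈a⌉₊, ha _ (Nat.le_ceil a)⟩

end RandomCorr

open Set Real RandomCorr in
theorem isRich_of_indepCount_lower_bound_general
    (g : ℝ → ℝ)
    (hg_mono : StrictMonoOn g (Set.Ici 0))
    (hg_unbounded : Filter.Tendsto g Filter.atTop Filter.atTop)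
    (hg_diff : DifferentiableOn ℝ g (Set.Ici 0))
    (Δ₀ : ℕ) (b : ℕ → ℕ)
    (h1 : ∀ Δ : ℕ, Δ₀ ≤ Δ →
      (((RandomCorr.sNat g Δ).choose (b Δ) : ℝ)) ≤ (Δ : ℝ) ^ ((1 : ℝ)/3) / 4)
    (h2 : ∀ Δ : ℕ, Δ₀ ≤ Δ → (b Δ : ℝ) ≤ (RandomCorr.sNat g Δ : ℝ) / 3)
    (h3 : ∀ Δ : ℕ, Δ₀ ≤ Δ → ∀ s : ℝ, (RandomCorr.sNat g Δ : ℝ) ≤ s →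
      2 * (b Δ : ℝ) / s ≤ deriv (fun x => Real.log (g x)) s)
    (V : Type) (G : SimpleGraph V) (Δ : ℕ)
    (hΔ₀ : Δ₀ ≤ Δ)
    (hI : ∀ F : G.Subgraph, RandomCorr.IsNbrSubgraph F →
      RandomCorr.sNat g Δ ≤ F.verts.ncard →
      g (F.verts.ncard : ℝ) ≤ (RandomCorr.subIndepCount F : ℝ)) :
    RandomCorr.ISRich G (b Δ : ℝ) Δ := by
  intro F hF hlarge
  set s := sNat g Δ
  set n := F.verts.ncard
  set k := b Δ
  have hks : 3 * k ≤ s := by exact_mod_cast (by linarith [h2 Δ hΔ₀] : (3 * k : ℝ) ≤ s)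
  have hchoose : 4 * (s.choose k : ℝ) ≤ (Δ : ℝ) ^ ((1 : ℝ) / 3) := by linarith [h1 Δ hΔ₀]
  have hchoose_pos : (1 : ℝ) ≤ s.choose k := by exact_mod_cast Nat.choose_pos (by omega)
  have hgs := rpow_one_div_three_le_apply_sNat hg_unbounded Δ
  have hsn : s ≤ n := le_of_two_mul_choose_lt_binomLe (b := k) (by omega) (by
    exact_mod_cast (by linarith : (2 * s.choose k : ℝ) < binomLe n k))
  have hs : 0 < s := by
    by_contra! hs0
    have hk : k = 0 := by omega
    have hbinom : binomLe n k = 1 := by rw [binomLe_natCast, hk]; simp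
    rw [hbinom, Nat.cast_one] at hlarge
    linarith
  have hgrowth : g s * ((n : ℝ) / s) ^ (2 * k) ≤ g n := by
    have hsn' : (s : ℝ) ≤ n := by exact_mod_cast hsn
    have hIcc : Icc (s : ℝ) n ⊆ Ici 0 := fun x hx => (Nat.cast_nonneg s).trans hx.1
    have := mul_rpow_div_le_of_le_deriv_log (c := ((2 * k : ℕ) : ℝ)) (by positivity) hsn'
      (hg_diff.continuousOn.mono hIcc) (hg_diff.mono (Ioo_subset_Icc_self.trans hIcc))
      (fun x hx => by linarith [hg_mono.monotoneOn (hIcc (left_mem_Icc.2 hsn')) (hIcc hx) hx.1])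
      (fun x hx => by push_cast; exact h3 Δ hΔ₀ x hx.1.le)
    rwa [rpow_natCast] at this
  have hI' : g s * ((n : ℝ) / s) ^ (2 * k) ≤ subIndepCount F := hgrowth.trans (hI F hF hsn)
  exact_mod_cast two_mul_binomLe_le_of_choose_mul_pow_le hs hks hsn
    (hI'.trans' (by gcongr; linarith))

/-- Sufficient conditions on `g` and `b` under which a lower bound
`I(F) ≥ g(|V(F)|)` on the number of independent sets of all large neighborhood subgraphs
implies that `G` is `b(Δ)`-IS-rich. -/
theorem isRich_of_indepCount_lower_bound
    (g : ℝ → ℝ)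
    (hg_mono : StrictMonoOn g (Set.Ici 0))
    (hg_unbounded : Filter.Tendsto g Filter.atTop Filter.atTop)
    (hg_diff : DifferentiableOn ℝ g (Set.Ici 0))
    (hg_nonneg : ∀ x : ℝ, 0 ≤ x → 0 ≤ g x)
    (hg0 : g 0 = 0)
    (Δ₀ : ℕ) (b : ℕ → ℕ)
    (h1 : ∀ Δ : ℕ, Δ₀ ≤ Δ →
      (((RandomCorr.sNat g Δ).choose (b Δ) : ℝ)) ≤ (Δ : ℝ) ^ ((1 : ℝ)/3) / 4)
    (h2 : ∀ Δ : ℕ, Δ₀ ≤ Δ → (b Δ : ℝ) ≤ (RandomCorr.sNat g Δ : ℝ) / 3)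
    (h3 : ∀ Δ : ℕ, Δ₀ ≤ Δ → ∀ s : ℝ, (RandomCorr.sNat g Δ : ℝ) ≤ s →
      2 * (b Δ : ℝ) / s ≤ deriv (fun x => Real.log (g x)) s)
    (V : Type) [Fintype V] (G : SimpleGraph V) (Δ : ℕ)
    (hΔ : RandomCorr.maxDeg G = Δ) (hΔ₀ : Δ₀ ≤ Δ)
    (hI : ∀ F : G.Subgraph, RandomCorr.IsNbrSubgraph F →
      RandomCorr.sNat g Δ ≤ F.verts.ncard →
      g (F.verts.ncard : ℝ) ≤ (RandomCorr.subIndepCount F : ℝ)) :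
    RandomCorr.ISRich G (b Δ : ℝ) Δ :=
  isRich_of_indepCount_lower_bound_general g hg_mono hg_unbounded hg_diff Δ₀ b h1 h2 h3 V G Δ hΔ₀ hI
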